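/- arXiv:2208.05464 — 4 statements merged into one kernel-verified Lean document; each statement's English description precedes it below -/
import Mathlib

section
/- Edmonds' characterisation: for a loopless matroid M with ground set E, the colouring number equals the maximum over all nonempty subsets X ⊆ E of positive rank of ⌈|X|/r(X)⌉. -/
open MeasureTheory Set Filter
open scoped ENNReal NNReal Matroid Topology

/-- The Gaussian (`q`-)binomial coefficient for real `q`. -/
noncomputable def gaussBinom (q : ℝ) (n d : ℕ) : ℝ :=
  ∏ j ∈ Finset.range d, (q ^ (n - j) - 1) / (q ^ (d - j) - 1)

/-- The points of the projective geometry `PG(n-1, q)` over a field `F` with `q` elements. -/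
abbrev PGPoint (F : Type) [Field F] (n : ℕ) := Projectivization F (Fin n → F)

instance pgFinite (F : Type) [Field F] [Fintype F] (n : ℕ) : Finite (PGPoint F n) :=
  Quotient.finite _

/-- The product Bernoulli measure modelling a random subset of `α` in which each element is
retained independently with probability `p`. -/
noncomputable def bernoulliMeasure (p : ℝ≥0∞) (hp : p ≤ 1) (α : Type) [Finite α] :
    Measure (α → Bool) :=
  letI : Fintype α := Fintype.ofFinite α
  Measure.pi fun _ => (PMF.bernoulli p.toNNReal (by simpa using ENNReal.toNNReal_mono ENNReal.one_ne_top hp)).toMeasure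

/-- A matroid is `k`-colourable if its ground set partitions into `k` independent sets. -/
def Matroid.Colorable {α : Type*} (M : Matroid α) (k : ℕ) : Prop :=
  ∃ f : α → ℕ, (∀ x ∈ M.E, f x < k) ∧ ∀ i, M.Indep {x ∈ M.E | f x = i}

/-- The colouring number of a matroid: the least `k` such that `M` is `k`-colourable. -/
noncomputable def Matroid.colNumber {α : Type*} (M : Matroid α) : ℕ :=
  sInf {k | M.Colorable k}

/-- The rank of a set in a matroid: the supremum of cardinalities of independent subsets. -/
noncomputable def Matroid.rankOf {α : Type*} (M : Matroid α) (X : Set α) : ℕ :=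
  sSup {k | ∃ I ⊆ X, M.Indep I ∧ I.ncard = k}

/-- `Es` is a `(b,c)`-decomposition of `M` relative to the colouring number bound `k`:
a partition of the ground set into nonempty classes of size at most `c * k`, every
transversal of which is `b`-colourable. -/
def Matroid.IsBCDecomposition {α : Type*} (M : Matroid α) (b : ℕ) (c : ℝ) (k : ℕ)
    {ℓ : ℕ} (Es : Fin ℓ → Set α) : Prop :=
  (∀ i, (Es i).Nonempty) ∧ (Set.univ.PairwiseDisjoint Es) ∧ (⋃ i, Es i) = M.E ∧
    (∀ i, (Es i).Finite ∧ ((Es i).ncard : ℝ) ≤ c * k) ∧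
    ∀ y : Fin ℓ → α, (∀ i, y i ∈ Es i) → (M ↾ Set.range y).Colorable b

/-- A matroid is `(b,c)`-decomposable if it admits a `(b,c)`-decomposition relative to its
colouring number. -/
def Matroid.BCDecomposable {α : Type*} (M : Matroid α) (b : ℕ) (c : ℝ) : Prop :=
  ∃ (ℓ : ℕ) (Es : Fin ℓ → Set α), M.IsBCDecomposition b c M.colNumber Es

/-- `M` is (a matroid isomorphic to) the projective geometry `PG(n-1,q)`: its ground set is all
of `PGPoint F n`, and a set of points is independent iff their representative vectors are
linearly independent. -/
def IsPGMatroid (F : Type) [Field F] (n : ℕ) (M : Matroid (PGPoint F n)) : Prop :=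
  M.E = Set.univ ∧
    ∀ S : Set (PGPoint F n),
      M.Indep S ↔ LinearIndependent F (fun x : S => Projectivization.rep x.val)

/-! A colouring of `E` with `k` colours is an independent transversal of the family
`({x} × Fin k)_{x ∈ E}` in the direct sum of `k` copies of `M`, whose rank function sends `S` to
`∑ i, r {x | (x, i) ∈ S}`. By Rado's theorem it exists iff `|X| ≤ k r(X)` for all `X ⊆ E`, that is,
iff `⌈|X| / r(X)⌉ ≤ k`. Rado's theorem is proved for list colourings by shrinking the lists: while
some list has two colours, submodularity of `r` lets one of them be dropped without breaking
Rado's condition; once all lists are singletons, the condition says that every colour class is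
independent. -/

open Set Function

namespace Matroid

variable {α ι : Type*} {M : Matroid α}

lemma rankOf_empty : M.rankOf ∅ = 0 := by
  simp [rankOf]

section rankOf

variable [M.RankFinite] {I X Y : Set α}

lemma cast_rankOf (X : Set α) : (M.rankOf X : ℕ∞) = M.eRk X := by
  obtain ⟨I, hI⟩ := M.exists_isBasis' X
  have hbound : ∀ k ∈ {k | ∃ J ⊆ X, M.Indep J ∧ J.ncard = k}, k ≤ I.ncard := by
    rintro _ ⟨J, hJX, hJ, rfl⟩
    have hle := hJ.encard_le_eRk_of_subset hJX
    rwa [← hI.encard_eq_eRk, ← hJ.finite.cast_ncard_eq, ← hI.indep.finite.cast_ncard_eq,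
      Nat.cast_le] at hle
  have hgreatest : IsGreatest {k | ∃ J ⊆ X, M.Indep J ∧ J.ncard = k} I.ncard :=
    ⟨⟨I, hI.subset, hI.indep, rfl⟩, hbound⟩
  rw [rankOf, hgreatest.csSup_eq, hI.indep.finite.cast_ncard_eq, hI.encard_eq_eRk]

lemma rankOf_mono (h : X ⊆ Y) : M.rankOf X ≤ M.rankOf Y := by
  have hle := M.eRk_mono h
  rwa [← cast_rankOf, ← cast_rankOf, Nat.cast_le] at hle

lemma rankOf_inter_add_rankOf_union_le (X Y : Set α) :
    M.rankOf (X ∩ Y) + M.rankOf (X ∪ Y) ≤ M.rankOf X + M.rankOf Y := by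
  have hle := M.eRk_inter_add_eRk_union_le X Y
  simp only [← cast_rankOf] at hle
  exact_mod_cast hle

lemma Indep.ncard_le_rankOf (hI : M.Indep I) (hIX : I ⊆ X) : I.ncard ≤ M.rankOf X := by
  have hle := hI.encard_le_eRk_of_subset hIX
  rwa [← hI.finite.cast_ncard_eq, ← cast_rankOf, Nat.cast_le] at hle

lemma indep_of_ncard_le_rankOf (hX : X.Finite) (h : X.ncard ≤ M.rankOf X) : M.Indep X :=
  (M.isRkFinite_of_finite hX).indep_of_encard_le_eRk <| by
    rw [← hX.cast_ncard_eq, ← cast_rankOf]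
    exact_mod_cast h

end rankOf

variable {L : α → Finset ι}

lemma sep_mem_update_of_notMem [DecidableEq α] {J : Set α} {e : α} (he : e ∉ J)
    (s : Finset ι) (i : ι) : {x ∈ J | i ∈ update L e s x} = {x ∈ J | i ∈ L x} := by
  ext x
  simp only [mem_ofPred_eq, and_congr_right_iff]
  rintro hx
  rw [update_of_ne (ne_of_mem_of_not_mem hx he)]

lemma rankOf_sep_union_add_rankOf_sep_inter_le [M.RankFinite] [DecidableEq α]
    [DecidableEq ι] {J₁ J₂ : Set α} {e : α} (he₁ : e ∈ J₁) (he₂ : e ∈ J₂) {a b : ι} (hab : a ≠ b)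
    (i : ι) :
    M.rankOf {x ∈ J₁ ∪ J₂ | i ∈ L x} +
        M.rankOf {x ∈ (J₁ ∩ J₂) \ {e} | i ∈ L x} ≤
      M.rankOf {x ∈ J₁ | i ∈ update L e ((L e).erase a) x} +
        M.rankOf {x ∈ J₂ | i ∈ update L e ((L e).erase b) x} := by
  refine le_trans (add_le_add (rankOf_mono ?_) (rankOf_mono ?_))
    (add_comm (M.rankOf _) _ ▸ rankOf_inter_add_rankOf_union_le _ _)
  · rintro x ⟨hx, hix⟩
    rcases eq_or_ne x e with rfl | hxe
    · by_cases hia : i = a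
      · subst hia
        exact .inr ⟨he₂, by simp [hix, hab]⟩
      · exact .inl ⟨he₁, by simp [hix, hia]⟩
    · simpa [update_of_ne hxe, hix] using hx
  · rintro x ⟨⟨⟨hx₁, hx₂⟩, hxe⟩, hix⟩
    simp [update_of_ne (hxe : x ≠ e), hx₁, hx₂, hix]

variable [Fintype ι]

/-- Rado's condition for the family `({x} × L x)_{x ∈ E}` in the direct sum of `ι` copies of `M`. -/
def RadoCondition (M : Matroid α) (L : α → Finset ι) : Prop :=
  ∀ J ⊆ M.E, J.ncard ≤ ∑ i, M.rankOf {x ∈ J | i ∈ L x}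

lemma RadoCondition.mem_of_sum_lt [DecidableEq α] (h : M.RadoCondition L) {J : Set α}
    (hJE : J ⊆ M.E) {e : α} {s : Finset ι}
    (hJ : ∑ i, M.rankOf {x ∈ J | i ∈ update L e s x} < J.ncard) : e ∈ J := by
  by_contra heJ
  simp only [sep_mem_update_of_notMem heJ] at hJ
  exact (h J hJE).not_gt hJ

/-- If dropping `a` and dropping `b` from the list of `e` both broke the condition, then summing
the submodular inequality over the colours would break it for the union of the two violating sets
or for their intersection minus `e`. -/
lemma RadoCondition.exists_erase [DecidableEq α] [DecidableEq ι] [M.Finite]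
    (h : M.RadoCondition L) {e : α} (he : 1 < (L e).card) :
    ∃ a ∈ L e, M.RadoCondition (update L e ((L e).erase a)) := by
  obtain ⟨a, ha, b, hb, hab⟩ := Finset.one_lt_card.mp he
  by_contra! hcon
  obtain ⟨J₁, hJ₁E, hJ₁⟩ : ∃ J ⊆ M.E, _ := by simpa [RadoCondition] using hcon a ha
  obtain ⟨J₂, hJ₂E, hJ₂⟩ : ∃ J ⊆ M.E, _ := by simpa [RadoCondition] using hcon b hb
  have he₁ := h.mem_of_sum_lt hJ₁E hJ₁
  have he₂ := h.mem_of_sum_lt hJ₂E hJ₂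
  have hsum := Finset.sum_le_sum (s := Finset.univ) fun i _ =>
    rankOf_sep_union_add_rankOf_sep_inter_le (M := M) (L := L) he₁ he₂ hab i
  rw [Finset.sum_add_distrib, Finset.sum_add_distrib] at hsum
  have hunion := h (J₁ ∪ J₂) (union_subset hJ₁E hJ₂E)
  have hinter := h ((J₁ ∩ J₂) \ {e}) (sdiff_subset.trans (inter_subset_left.trans hJ₁E))
  have hfin₁ := M.set_finite J₁ hJ₁E
  have hcard := ncard_union_add_ncard_inter J₁ J₂ hfin₁ (M.set_finite J₂ hJ₂E)
  have hcard' := ncard_sdiff_singleton_add_one (show e ∈ J₁ ∩ J₂ from ⟨he₁, he₂⟩)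
    (hfin₁.inter_of_left J₂)
  omega

lemma RadoCondition.nonempty (h : M.RadoCondition L) {x : α} (hx : x ∈ M.E) :
    (L x).Nonempty := by
  rw [Finset.nonempty_iff_ne_empty]
  intro hLx
  have hempty : ∀ i, {y ∈ ({x} : Set α) | i ∈ L y} = ∅ := by
    intro i
    ext y
    simp only [mem_ofPred_eq, mem_singleton_iff, mem_empty_iff_false, iff_false, not_and]
    rintro rfl
    simp [hLx]
  have hx := h {x} (singleton_subset_iff.2 hx)
  simp only [hempty, rankOf_empty, Finset.sum_const_zero, ncard_singleton] at hx
  omega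

lemma RadoCondition.indep_setOf_mem [M.Finite] (h : M.RadoCondition L)
    (hL : ∀ x ∈ M.E, (L x).card ≤ 1) (i : ι) : M.Indep {x ∈ M.E | i ∈ L x} := by
  set J := {x ∈ M.E | i ∈ L x}
  have hothers : ∀ j ≠ i, {x ∈ J | j ∈ L x} = ∅ := by
    intro j hj
    ext x
    simp only [mem_ofPred_eq, mem_empty_iff_false, iff_false, not_and]
    exact fun hx hjx => hj (Finset.card_le_one.mp (hL x hx.1) j hjx i hx.2)
  have hJ := h J (sep_subset _ _)
  rw [Finset.sum_eq_single i (fun j _ hj => by rw [hothers j hj, rankOf_empty]) (by simp),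
    sep_eq_self_iff_mem_true.2 fun x hx => hx.2] at hJ
  exact indep_of_ncard_le_rankOf (M.set_finite J (sep_subset _ _)) hJ

theorem RadoCondition.exists_coloring [Nonempty ι] [DecidableEq ι] [M.Finite]
    (h : M.RadoCondition L) :
    ∃ c : α → ι, (∀ x ∈ M.E, c x ∈ L x) ∧ ∀ i, M.Indep {x ∈ M.E | c x = i} := by
  classical
  induction hn : ∑ x ∈ M.ground_finite.toFinset, (L x).card using Nat.strong_induction_on
    generalizing L with
  | _ n ih =>
  by_cases hL : ∃ e ∈ M.E, 1 < (L e).card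
  · obtain ⟨e, heE, he⟩ := hL
    obtain ⟨a, ha, h'⟩ := h.exists_erase he
    have hsub : ∀ x, update L e ((L e).erase a) x ⊆ L x := by
      intro x
      rcases eq_or_ne x e with rfl | hxe
      · simpa using Finset.erase_subset a (L x)
      · simp [update_of_ne hxe]
    have hlt : ∑ x ∈ M.ground_finite.toFinset, (update L e ((L e).erase a) x).card < n :=
      hn ▸ Finset.sum_lt_sum (fun x _ => Finset.card_le_card (hsub x))
        ⟨e, by simpa using heE, by simpa using Finset.card_erase_lt_of_mem ha⟩
    obtain ⟨c, hcL, hc⟩ := ih _ hlt h' rfl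
    exact ⟨c, fun x hx => hsub x (hcL x hx), hc⟩
  · push Not at hL
    refine ⟨fun x => Classical.epsilon (· ∈ L x), fun x hx => Classical.epsilon_spec
      (h.nonempty hx), fun i => (h.indep_setOf_mem hL i).subset ?_⟩
    rintro x ⟨hx, rfl⟩
    exact ⟨hx, Classical.epsilon_spec (h.nonempty hx)⟩

variable [M.Finite] {k : ℕ}

lemma colorable_of_forall_ncard_le_mul_rankOf (h : ∀ X ⊆ M.E, X.ncard ≤ k * M.rankOf X) :
    M.Colorable k := by
  rcases Nat.eq_zero_or_pos k with rfl | hk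
  · have hE : M.E = ∅ := (ncard_eq_zero M.ground_finite).mp (by simpa using h M.E subset_rfl)
    exact ⟨fun _ => 0, by simp [hE], fun _ => by simp [hE]⟩
  · have : NeZero k := ⟨hk.ne'⟩
    obtain ⟨c, -, hc⟩ := RadoCondition.exists_coloring (M := M)
      (L := fun _ => (Finset.univ : Finset (Fin k))) fun J hJ => by simpa [mul_comm] using h J hJ
    refine ⟨fun x => c x, fun x _ => (c x).isLt, fun i => ?_⟩
    by_cases hi : i < k
    · refine (hc ⟨i, hi⟩).subset ?_
      rintro x ⟨hx, hcx⟩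
      exact ⟨hx, Fin.ext hcx⟩
    · convert M.empty_indep
      exact eq_empty_of_forall_notMem fun x ⟨_, hcx⟩ => hi (hcx ▸ (c x).isLt)

lemma Colorable.ncard_le_mul_rankOf (hk : M.Colorable k) {X : Set α} (hX : X ⊆ M.E) :
    X.ncard ≤ k * M.rankOf X := by
  obtain ⟨f, hfk, hf⟩ := hk
  have hcover : X ⊆ ⋃ i : Fin k, {x ∈ X | f x = i} :=
    fun x hx => mem_iUnion.2 ⟨⟨f x, hfk x (hX hx)⟩, hx, rfl⟩
  calc X.ncard ≤ (⋃ i : Fin k, {x ∈ X | f x = i}).ncard :=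
        ncard_le_ncard hcover <|
          M.set_finite _ ((iUnion_subset fun _ => sep_subset _ _).trans hX)
    _ ≤ ∑ i : Fin k, {x ∈ X | f x = i}.ncard := ncard_iUnion_le_of_fintype _
    _ ≤ ∑ _i : Fin k, M.rankOf X := Finset.sum_le_sum fun i _ =>
        ((hf i).subset fun x hx => ⟨hX hx.1, hx.2⟩).ncard_le_rankOf (sep_subset _ _)
    _ = k * M.rankOf X := by simp

end Matroid

lemma Nat.ceil_div_le_iff {n r k : ℕ} (hr : 0 < r) : ⌈(n : ℝ) / r⌉₊ ≤ k ↔ n ≤ k * r := by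
  rw [Nat.ceil_le, div_le_iff₀ (by exact_mod_cast hr)]
  norm_cast

/-- Edmonds' characterisation: for a finite loopless matroid `M`, the colouring number equals the
maximum of `⌈|X| / r(X)⌉` over all nonempty subsets `X` of the ground set of positive rank. -/
theorem edmonds_characterisation {α : Type*} (M : Matroid α) (hfin : M.E.Finite)
    (hloopless : ∀ x ∈ M.E, M.Indep {x}) :
    M.colNumber = sSup {m : ℕ | ∃ X ⊆ M.E, X.Nonempty ∧ 0 < M.rankOf X ∧
      m = ⌈(X.ncard : ℝ) / (M.rankOf X : ℝ)⌉₊} := by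
  have : M.Finite := ⟨hfin⟩
  set S := {m : ℕ | ∃ X ⊆ M.E, X.Nonempty ∧ 0 < M.rankOf X ∧
    m = ⌈(X.ncard : ℝ) / (M.rankOf X : ℝ)⌉₊}
  have hrank : ∀ X ⊆ M.E, X.Nonempty → 0 < M.rankOf X := by
    rintro X hX ⟨x, hx⟩
    exact ((hloopless x (hX hx)).ncard_le_rankOf (singleton_subset_iff.2 hx)).trans_lt' (by simp)
  have hS : BddAbove S := ⟨M.E.ncard, by
    rintro _ ⟨X, hX, -, hr, rfl⟩
    exact (Nat.ceil_div_le_iff hr).2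
      ((ncard_le_ncard hX hfin).trans (Nat.le_mul_of_pos_right _ hr))⟩
  have hcol : M.Colorable (sSup S) := by
    refine Matroid.colorable_of_forall_ncard_le_mul_rankOf fun X hX => ?_
    rcases X.eq_empty_or_nonempty with rfl | hne
    · simp
    · have hr := hrank X hX hne
      exact (Nat.ceil_div_le_iff hr).1 (le_csSup hS ⟨X, hX, hne, hr, rfl⟩)
  have hcolNumber : M.Colorable M.colNumber :=
    Nat.sInf_mem (s := {k | M.Colorable k}) ⟨_, hcol⟩
  refine le_antisymm (Nat.sInf_le hcol) (csSup_le' ?_)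
  rintro _ ⟨X, hX, -, hr, rfl⟩
  exact (Nat.ceil_div_le_iff hr).2 (hcolNumber.ncard_le_mul_rankOf hX)
end

section
/- Let q ≥ 2 be a prime power and p ∈ (0,1]. Fix an integer d ≥ 1 (possibly growing like ⌈log log n⌉). Call a rank-d flat F of PG(n-1, q) dense (with respect to the random subset E_p) if |E_p ∩ F| ≥ (1/2)·p·(q^d - 1)/(q - 1) and r(E_p ∩ F) = d. Then the probability that a fixed rank-d flat fails to be dense is at most exp(-(1/8)·p·(q^d-1)/(q-1)) + q^d·(1-p)^{q^{d-1}}. -/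
open MeasureTheory Set Filter
open scoped ENNReal NNReal Matroid Topology

/-!
A rank-`d` flat `W` fails to be dense only if `E_p ∩ W` is small or spans a proper subspace of
`W`. The flat has `N = (q^d - 1)/(q - 1)` points, and Markov's inequality applied to
`2^{-|E_p ∩ W|}` (a product of independent factors of mean `1 - p/2`) bounds the first event by
`2^{pN/2} (1 - p/2)^N ≤ exp(-pN/8)`. A proper subspace of `W` lies in a hyperplane `ker φ` of `W`,
and then `E_p` misses all `q^{d-1}` points of `W` off that hyperplane; a union bound over the
fewer than `q^d` nonzero functionals `φ` bounds the second event.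
-/

open Real

section Bernoulli

variable {p : ℝ≥0∞}

noncomputable def bernoulliBool (p : ℝ≥0∞) (hp : p ≤ 1) : Measure Bool :=
  (PMF.bernoulli p.toNNReal (by simpa using ENNReal.toNNReal_mono ENNReal.one_ne_top hp)).toMeasure

instance (hp : p ≤ 1) : IsProbabilityMeasure (bernoulliBool p hp) := by
  unfold bernoulliBool; infer_instance

lemma bernoulliBool_false (hp : p ≤ 1) : bernoulliBool p hp {false} = 1 - p := by
  rw [bernoulliBool, PMF.toMeasure_apply_singleton _ _ (measurableSet_singleton _)]
  refine (PMF.bernoulli_apply _ _).trans ?_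
  simp [ENNReal.coe_sub, ENNReal.coe_toNNReal (ne_top_of_le_ne_top ENNReal.one_ne_top hp)]

lemma bernoulliBool_true (hp : p ≤ 1) : bernoulliBool p hp {true} = p := by
  rw [bernoulliBool, PMF.toMeasure_apply_singleton _ _ (measurableSet_singleton _)]
  refine (PMF.bernoulli_apply _ _).trans ?_
  simp [ENNReal.coe_toNNReal (ne_top_of_le_ne_top ENNReal.one_ne_top hp)]

lemma integral_bernoulliBool (hp : p ≤ 1) (f : Bool → ℝ) :
    ∫ b, f b ∂bernoulliBool p hp = p.toReal * f true + (1 - p.toReal) * f false := by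
  rw [integral_fintype .of_finite, Fintype.sum_bool, measureReal_def, measureReal_def,
    bernoulliBool_true, bernoulliBool_false, ENNReal.toReal_sub_of_le hp ENNReal.one_ne_top]
  simp

variable {α : Type} [Fintype α] (hp : p ≤ 1)

lemma bernoulliMeasure_eq_pi :
    bernoulliMeasure p hp α = Measure.pi fun _ => bernoulliBool p hp := by
  rw [bernoulliMeasure, Subsingleton.elim (Fintype.ofFinite α) ‹_›]
  rfl

instance : IsProbabilityMeasure (bernoulliMeasure p hp α) := by
  rw [bernoulliMeasure_eq_pi]; infer_instance

lemma bernoulliMeasure_setOf_forall_false (T : Set α) :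
    bernoulliMeasure p hp α {ω | ∀ x ∈ T, ω x = false} = (1 - p) ^ T.ncard := by
  classical
  have hcyl : {ω : α → Bool | ∀ x ∈ T, ω x = false}
      = Set.univ.pi fun x => if x ∈ T then {false} else Set.univ := by
    ext ω
    simp only [Set.mem_ofPred_eq, Set.mem_univ_pi]
    refine forall_congr' fun x => ?_
    split_ifs with hx <;> simp [hx]
  rw [hcyl, bernoulliMeasure_eq_pi, Measure.pi_pi]
  simp only [apply_ite (bernoulliBool p hp), bernoulliBool_false, measure_univ]
  rw [Finset.prod_ite, Finset.prod_const, Finset.prod_const_one, mul_one,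
    ← Set.ncard_coe_finset]
  simp

lemma integral_prod_bernoulliMeasure (f : α → Bool → ℝ) :
    ∫ ω, ∏ x, f x (ω x) ∂bernoulliMeasure p hp α
      = ∏ x, (p.toReal * f x true + (1 - p.toReal) * f x false) := by
  simp_rw [bernoulliMeasure_eq_pi, integral_fintype_prod_eq_prod, integral_bernoulliBool]

lemma integral_half_pow_card_bernoulliMeasure (T : Set α) :
    ∫ ω, (1 / 2 : ℝ) ^ Nat.card {x // ω x = true ∧ x ∈ T} ∂bernoulliMeasure p hp α
      = (1 - p.toReal / 2) ^ T.ncard := by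
  classical
  have hprod : ∀ ω : α → Bool, (1 / 2 : ℝ) ^ Nat.card {x // ω x = true ∧ x ∈ T}
      = ∏ x, if x ∈ T ∧ ω x = true then 1 / 2 else 1 := by
    intro ω
    rw [Finset.prod_ite, Finset.prod_const, Finset.prod_const_one, mul_one,
      Nat.card_eq_fintype_card, Fintype.card_subtype]
    simp only [and_comm]
  simp_rw [hprod]
  rw [integral_prod_bernoulliMeasure (f := fun x b => if x ∈ T ∧ b = true then 1 / 2 else 1)]
  have hfactor : ∀ x, p.toReal * (if x ∈ T ∧ true = true then 1 / 2 else 1)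
      + (1 - p.toReal) * (if x ∈ T ∧ false = true then 1 / 2 else 1)
      = if x ∈ T then 1 - p.toReal / 2 else 1 := by
    intro x
    split_ifs <;> simp_all
    ring
  rw [Finset.prod_congr rfl fun x _ => hfactor x, Finset.prod_ite, Finset.prod_const,
    Finset.prod_const_one, mul_one, ← Set.ncard_coe_finset]
  simp

lemma bernoulliMeasure_card_lt_half_le (T : Set α) :
    bernoulliMeasure p hp α
        {ω | (Nat.card {x // ω x = true ∧ x ∈ T} : ℝ) < p.toReal * T.ncard / 2}
      ≤ ENNReal.ofReal (exp (-(p.toReal * T.ncard / 8))) := by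
  set μ := bernoulliMeasure p hp α
  set P := p.toReal
  set N : ℝ := (T.ncard : ℝ) with hN_def
  have hP : 0 ≤ P := ENNReal.toReal_nonneg
  have hN : 0 ≤ N := Nat.cast_nonneg _
  -- Markov's inequality for `2 ^ (-#(E ∩ T))`, at the level `2 ^ (-P * N / 2)`
  set ε := exp (-(P * N / 2 * log 2))
  have hε : 0 < ε := exp_pos _
  have hsub : {ω : α → Bool | (Nat.card {x // ω x = true ∧ x ∈ T} : ℝ) < P * N / 2}
      ⊆ {ω | ε ≤ (1 / 2 : ℝ) ^ Nat.card {x // ω x = true ∧ x ∈ T}} := by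
    intro ω hω
    rw [Set.mem_ofPred_eq, one_div, inv_pow, ← exp_log (by positivity : (0 : ℝ) < 2 ^ _),
      ← exp_neg, exp_le_exp, log_pow, neg_le_neg_iff]
    exact mul_le_mul_of_nonneg_right hω.le (log_nonneg one_le_two)
  have hmarkov := mul_meas_ge_le_integral_of_nonneg (μ := μ)
    (f := fun ω => (1 / 2 : ℝ) ^ Nat.card {x // ω x = true ∧ x ∈ T})
    (.of_forall fun ω => by positivity) .of_finite ε
  rw [integral_half_pow_card_bernoulliMeasure] at hmarkov
  have hreal : μ.real {ω | (Nat.card {x // ω x = true ∧ x ∈ T} : ℝ) < P * N / 2}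
      ≤ exp (-(P * N / 8)) := calc
    _ ≤ μ.real {ω | ε ≤ (1 / 2 : ℝ) ^ Nat.card {x // ω x = true ∧ x ∈ T}} :=
      measureReal_mono hsub
    _ ≤ (1 - P / 2) ^ T.ncard / ε := by rw [le_div_iff₀' hε]; exact hmarkov
    _ ≤ exp (-(P / 2)) ^ T.ncard / ε := by
      gcongr
      · linarith [ENNReal.toReal_mono ENNReal.one_ne_top hp, ENNReal.toReal_one]
      · linarith [add_one_le_exp (-(P / 2))]
    _ = exp (P * N / 2 * (log 2 - 1)) := by
      rw [← exp_nat_mul, div_eq_mul_inv, ← exp_neg, ← exp_add, ← hN_def]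
      ring_nf
    _ ≤ exp (-(P * N / 8)) := by
      rw [exp_le_exp]
      nlinarith [log_two_lt_d9, mul_nonneg hP hN]
  rw [← ofReal_measureReal]
  exact ENNReal.ofReal_le_ofReal hreal

end Bernoulli

namespace Projectivization

open Module
open scoped LinearAlgebra.Projectivization

variable {F V : Type*} [Field F] [AddCommGroup V] [Module F V]

lemma range_map_subtype (K : Submodule F V) :
    Set.range (map K.subtype K.injective_subtype) = {x : ℙ F V | x.rep ∈ K} := by
  ext x
  constructor
  · rintro ⟨y, rfl⟩
    induction y using ind with | h v hv =>
    rw [map_mk, Set.mem_ofPred_eq]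
    obtain ⟨a, ha⟩ := exists_smul_eq_mk_rep F (K.subtype v) (by simpa using hv)
    rw [← ha]
    exact K.smul_of_tower_mem a v.2
  · intro hx
    refine ⟨mk F ⟨x.rep, hx⟩ (by simpa using x.rep_nonzero), ?_⟩
    rw [map_mk]
    exact x.mk_rep

variable [Finite V]

lemma ncard_setOf_rep_mem_mul (K : Submodule F V) :
    {x : ℙ F V | x.rep ∈ K}.ncard * (Nat.card F - 1) = Nat.card F ^ finrank F K - 1 := by
  rw [← range_map_subtype, Set.ncard_range_of_injective (map_injective _ _),
    ← Projectivization.card, Module.natCard_eq_pow_finrank (K := F)]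

lemma ncard_setOf_rep_mem_eq_div [Finite F] (K : Submodule F V) :
    ({x : ℙ F V | x.rep ∈ K}.ncard : ℝ)
      = ((Nat.card F : ℝ) ^ finrank F K - 1) / ((Nat.card F : ℝ) - 1) := by
  have hq : 1 < Nat.card F := Finite.one_lt_card
  rw [eq_div_iff (sub_ne_zero.2 (by exact_mod_cast hq.ne')), ← Nat.cast_pred (by omega),
    ← Nat.cast_mul, ncard_setOf_rep_mem_mul, Nat.cast_sub (Nat.one_le_pow _ _ (by omega))]
  push_cast
  ring

lemma ncard_setOf_rep_mem_diff [Finite F] {H K : Submodule F V} (hHK : H ≤ K)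
    (hrank : finrank F H + 1 = finrank F K) :
    {x : ℙ F V | x.rep ∈ K ∧ x.rep ∉ H}.ncard = Nat.card F ^ finrank F H := by
  have hq : 1 < Nat.card F := Finite.one_lt_card
  have hdiff : {x : ℙ F V | x.rep ∈ K ∧ x.rep ∉ H}
      = {x : ℙ F V | x.rep ∈ K} \ {x | x.rep ∈ H} := rfl
  have hsub : {x : ℙ F V | x.rep ∈ H} ⊆ {x | x.rep ∈ K} := fun x hx => hHK hx
  refine Nat.eq_of_mul_eq_mul_right (Nat.sub_pos_of_lt hq) ?_
  rw [hdiff, Set.ncard_sdiff hsub, Nat.sub_mul, ncard_setOf_rep_mem_mul,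
    ncard_setOf_rep_mem_mul, ← hrank, Nat.sub_sub_sub_cancel_right (Nat.one_le_pow _ _ (by omega)),
    pow_succ, Nat.mul_sub_one]

end Projectivization

open Module in
lemma Submodule.exists_dual_ne_zero_le_map_ker {K V : Type*} [Field K] [AddCommGroup V] [Module K V]
    {U W : Submodule K V} (hUW : U < W) :
    ∃ φ : Dual K W, φ ≠ 0 ∧ U ≤ (LinearMap.ker φ).map W.subtype := by
  have hlt : U.comap W.subtype < ⊤ :=
    lt_top_iff_ne_top.2 fun h => hUW.not_ge (comap_subtype_eq_top.1 h)
  obtain ⟨φ, hφ, hker⟩ := (U.comap W.subtype).exists_le_ker_of_lt_top hlt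
  exact ⟨φ, hφ, fun u hu => ⟨⟨u, hUW.le hu⟩, hker hu, rfl⟩⟩

section RandomSubset

open Module
open Projectivization (rep ncard_setOf_rep_mem_diff)
open scoped LinearAlgebra.Projectivization

variable {F V : Type} [Field F] [Finite F] [AddCommGroup V] [Module F V] [Finite V]
  {p : ℝ≥0∞} (hp : p ≤ 1)

lemma bernoulliMeasure_finrank_span_ne_le (W : Submodule F V) :
    bernoulliMeasure p hp (ℙ F V)
        {ω : ℙ F V → Bool | finrank F (Submodule.span F (rep '' {x | ω x = true ∧ x.rep ∈ W}))
          ≠ finrank F W}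
      ≤ (Nat.card F : ℝ≥0∞) ^ finrank F W * (1 - p) ^ (Nat.card F ^ (finrank F W - 1)) := by
  classical
  have := Fintype.ofFinite (ℙ F V)
  have : Finite (Dual F W) := Module.finite_of_finite F
  have := Fintype.ofFinite (Dual F W)
  set H : Dual F W → Submodule F V := fun φ : Dual F W => (LinearMap.ker φ).map W.subtype
  have hsub : {ω : ℙ F V → Bool | finrank F (Submodule.span F (rep '' {x | ω x = true ∧ x.rep ∈ W}))
        ≠ finrank F W}
      ⊆ ⋃ φ : {φ : Dual F W // φ ≠ 0}, {ω | ∀ x ∈ {x : ℙ F V | x.rep ∈ W ∧ x.rep ∉ H φ},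
        ω x = false} := by
    intro ω hω
    have hle : Submodule.span F (rep '' {x : ℙ F V | ω x = true ∧ x.rep ∈ W}) ≤ W :=
      Submodule.span_le.2 (by rintro _ ⟨x, hx, rfl⟩; exact hx.2)
    obtain ⟨φ, hφ, hker⟩ :=
      Submodule.exists_dual_ne_zero_le_map_ker (hle.lt_of_ne fun h => hω (by rw [h]))
    refine Set.mem_iUnion.2 ⟨⟨φ, hφ⟩, fun x ⟨hxW, hxH⟩ => ?_⟩
    by_contra hx
    exact hxH (hker (Submodule.subset_span ⟨x, ⟨by simpa using hx, hxW⟩, rfl⟩))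
  have hcount : ∀ φ : {φ : Dual F W // φ ≠ 0},
      {x : ℙ F V | x.rep ∈ W ∧ x.rep ∉ H φ}.ncard = Nat.card F ^ (finrank F W - 1) := by
    rintro ⟨φ, hφ⟩
    have hrank : finrank F (H φ) + 1 = finrank F W := by
      rw [Submodule.finrank_map_subtype_eq, Dual.finrank_ker_add_one_of_ne_zero hφ]
    rw [ncard_setOf_rep_mem_diff (Submodule.map_subtype_le _ _) hrank, ← hrank,
      Nat.add_sub_cancel]
  have hdual : Fintype.card {φ : Dual F W // φ ≠ 0} ≤ Nat.card F ^ finrank F W := by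
    rw [← Subspace.dual_finrank_eq, ← Module.natCard_eq_pow_finrank, Nat.card_eq_fintype_card]
    exact Fintype.card_subtype_le _
  calc _ ≤ ∑ φ : {φ : Dual F W // φ ≠ 0}, bernoulliMeasure p hp (ℙ F V)
          {ω | ∀ x ∈ {x : ℙ F V | x.rep ∈ W ∧ x.rep ∉ H φ}, ω x = false} :=
        (measure_mono hsub).trans (measure_iUnion_fintype_le _ _)
    _ = Fintype.card {φ : Dual F W // φ ≠ 0} * (1 - p) ^ (Nat.card F ^ (finrank F W - 1)) := by
      simp only [bernoulliMeasure_setOf_forall_false, hcount, Finset.sum_const, Finset.card_univ,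
        nsmul_eq_mul]
    _ ≤ _ := by
      gcongr
      exact_mod_cast hdual

end RandomSubset

theorem dense_flat_failure_general (q n d : ℕ)
    (F : Type) [Field F] [Fintype F] (hcard : Fintype.card F = q)
    (p : ℝ≥0∞) (hp1 : p ≤ 1)
    (W : Submodule F (Fin n → F)) (hW : Module.finrank F W = d) :
    bernoulliMeasure p hp1 (PGPoint F n)
        {ω | ¬ ((1 / 2) * p.toReal * ((q : ℝ) ^ d - 1) / ((q : ℝ) - 1)
                  ≤ (Nat.card {x : PGPoint F n // ω x = true ∧ x.rep ∈ W} : ℝ) ∧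
                Module.finrank F (Submodule.span F
                  (Projectivization.rep '' {x : PGPoint F n | ω x = true ∧ x.rep ∈ W})) = d)}
      ≤ ENNReal.ofReal (Real.exp (-(1 / 8) * p.toReal * ((q : ℝ) ^ d - 1) / ((q : ℝ) - 1)))
          + (q : ℝ≥0∞) ^ d * (1 - p) ^ (q ^ (d - 1)) := by
  have := Fintype.ofFinite (PGPoint F n)
  have hq : Nat.card F = q := by rw [Nat.card_eq_fintype_card, hcard]
  set T := {x : PGPoint F n | x.rep ∈ W}
  have hT : (T.ncard : ℝ) = ((q : ℝ) ^ d - 1) / ((q : ℝ) - 1) := by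
    rw [Projectivization.ncard_setOf_rep_mem_eq_div, hq, hW]
  have hθ : (1 / 2) * p.toReal * ((q : ℝ) ^ d - 1) / ((q : ℝ) - 1) = p.toReal * T.ncard / 2 := by
    rw [hT]; ring
  have hsparse := bernoulliMeasure_card_lt_half_le hp1 T
  have hspan := bernoulliMeasure_finrank_span_ne_le hp1 W
  rw [hq, hW] at hspan
  simp only [not_and_or, not_le, Set.ofPred_or, hθ]
  refine (measure_union_le _ _).trans (add_le_add (hsparse.trans_eq ?_) hspan)
  rw [hT]
  ring_nf

/-- For a fixed rank-`d` flat `W` of `PG(n-1,q)`, the probability that `W` fails to be dense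
(i.e. fails to contain at least `(1/2)p(q^d-1)/(q-1)` points of `E_p` spanning rank `d`) is at
most `exp(-(1/8)p(q^d-1)/(q-1)) + q^d (1-p)^{q^{d-1}}`. -/
theorem dense_flat_failure (q n d : ℕ) (hq : 2 ≤ q) (hd : 1 ≤ d)
    (F : Type) [Field F] [Fintype F] (hcard : Fintype.card F = q)
    (p : ℝ≥0∞) (hp0 : 0 < p) (hp1 : p ≤ 1)
    (W : Submodule F (Fin n → F)) (hW : Module.finrank F W = d) :
    bernoulliMeasure p hp1 (PGPoint F n)
        {ω | ¬ ((1 / 2) * p.toReal * ((q : ℝ) ^ d - 1) / ((q : ℝ) - 1)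
                  ≤ (Nat.card {x : PGPoint F n // ω x = true ∧ x.rep ∈ W} : ℝ) ∧
                Module.finrank F (Submodule.span F
                  (Projectivization.rep '' {x : PGPoint F n | ω x = true ∧ x.rep ∈ W})) = d)}
      ≤ ENNReal.ofReal (Real.exp (-(1 / 8) * p.toReal * ((q : ℝ) ^ d - 1) / ((q : ℝ) - 1)))
          + (q : ℝ≥0∞) ^ d * (1 - p) ^ (q ^ (d - 1)) :=
  dense_flat_failure_general q n d F hcard p hp1 W hW
end

section
/- Let q ≥ 2, and let d, n, ℓ, k, c be such that ℓ ≤ n, ck ≤ c(1+δ)p·q^n/((q-1)n), and n·q^{-d²} > c²(1+δ)²p²/(q-1)². Then ℓ·(ck choose 2)·(q^n choose d-2) < (1/2)·q^{nd - d²} ≤ (1/2)·[n choose d]_q. -/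
open MeasureTheory Set Filter
open scoped ENNReal NNReal Matroid Topology

/-!
Bounding `C(m, 2) ≤ m² / 2`, `C(qⁿ, d - 2) ≤ qⁿ⁽ᵈ⁻²⁾` and `ℓ ≤ n`, the hypothesis on `m` turns the
left-hand side into at most `a² q^{nd} / (2n)` with `a = c(1+δ)p/(q-1)`, and the hypothesis
`a² < n q^{-d²}` brings this below `q^{nd-d²} / 2`. The Gaussian binomial is bounded below factor
by factor: `(q^{e+k} - 1) / (q^k - 1) ≥ q^e`.
-/

lemma pow_le_pow_add_sub_one_div {q : ℝ} (hq : 1 < q) (e : ℕ) {k : ℕ} (hk : k ≠ 0) :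
    q ^ e ≤ (q ^ (e + k) - 1) / (q ^ k - 1) := by
  have hqk : 0 < q ^ k - 1 := sub_pos.2 (one_lt_pow₀ hq hk)
  have hqe : 1 ≤ q ^ e := one_le_pow₀ hq.le
  rw [le_div_iff₀ hqk, pow_add]
  linarith

lemma pow_le_gaussBinom {q : ℝ} (hq : 1 < q) {n d : ℕ} (hdn : d ≤ n) :
    q ^ ((n - d) * d) ≤ gaussBinom q n d := by
  rw [gaussBinom, pow_mul, Finset.pow_eq_prod_const]
  refine Finset.prod_le_prod (fun _ _ => by positivity) fun j hj => ?_
  have hjd : j < d := Finset.mem_range.1 hj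
  rw [show n - j = (n - d) + (d - j) by omega]
  exact pow_le_pow_add_sub_one_div hq _ (by omega)

lemma mul_sq_mul_pow_lt_pow {Q x a : ℝ} {n d : ℕ} (hQ : 0 < Q) (hd : 2 ≤ d) (hdn : d ≤ n)
    (hx0 : 0 ≤ x) (hx : x ≤ a * Q ^ n / n) (ha : a ^ 2 < n / Q ^ (d ^ 2)) :
    n * x ^ 2 * (Q ^ n) ^ (d - 2) < Q ^ (n * d - d ^ 2) := by
  have hn : (0 : ℝ) < n := by exact_mod_cast (by omega : 0 < n)
  have hexp : (Q ^ n) ^ 2 * (Q ^ n) ^ (d - 2) = Q ^ (n * d - d ^ 2) * Q ^ (d ^ 2) := by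
    rw [← pow_add, ← pow_mul, ← pow_add, Nat.add_sub_cancel' hd,
      Nat.sub_add_cancel (by rw [sq]; exact Nat.mul_le_mul_right d hdn)]
  have ha' : a ^ 2 * Q ^ (d ^ 2) / n < 1 := by
    rw [div_lt_one hn, ← lt_div_iff₀ (by positivity)]
    exact ha
  calc n * x ^ 2 * (Q ^ n) ^ (d - 2)
      ≤ n * (a * Q ^ n / n) ^ 2 * (Q ^ n) ^ (d - 2) := by gcongr
    _ = a ^ 2 * ((Q ^ n) ^ 2 * (Q ^ n) ^ (d - 2)) / n := by field_simp
    _ = a ^ 2 * Q ^ (d ^ 2) / n * Q ^ (n * d - d ^ 2) := by rw [hexp]; ring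
    _ < 1 * Q ^ (n * d - d ^ 2) := by gcongr
    _ = Q ^ (n * d - d ^ 2) := one_mul _

theorem contradiction_chain_general (q n d ℓ m : ℕ) (c δ p : ℝ) (hq : 2 ≤ q)
    (hd2 : 2 ≤ d) (hdn : d ≤ n) (hl : ℓ ≤ n)
    (hm : (m : ℝ) ≤ c * (1 + δ) * p * (q : ℝ) ^ n / (((q : ℝ) - 1) * n))
    (hbig : c ^ 2 * (1 + δ) ^ 2 * p ^ 2 / ((q : ℝ) - 1) ^ 2 < (n : ℝ) / (q : ℝ) ^ (d ^ 2)) :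
    (ℓ : ℝ) * (Nat.choose m 2 : ℝ) * (Nat.choose (q ^ n) (d - 2) : ℝ)
        < (1 / 2) * (q : ℝ) ^ (n * d - d ^ 2) ∧
    (1 / 2) * (q : ℝ) ^ (n * d - d ^ 2) ≤ (1 / 2) * gaussBinom (q : ℝ) n d := by
  have hQ : (1 : ℝ) < q := by exact_mod_cast hq
  refine ⟨?_, ?_⟩
  · have hchoose : (Nat.choose (q ^ n) (d - 2) : ℝ) ≤ ((q : ℝ) ^ n) ^ (d - 2) := by
      exact_mod_cast Nat.choose_le_pow (q ^ n) (d - 2)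
    have hm2 : (Nat.choose m 2 : ℝ) ≤ (m : ℝ) ^ 2 / 2 := by
      simpa using Nat.choose_le_pow_div (α := ℝ) 2 m
    calc (ℓ : ℝ) * (Nat.choose m 2 : ℝ) * (Nat.choose (q ^ n) (d - 2) : ℝ)
        ≤ n * ((m : ℝ) ^ 2 / 2) * ((q : ℝ) ^ n) ^ (d - 2) := by gcongr
      _ = (1 / 2) * (n * (m : ℝ) ^ 2 * ((q : ℝ) ^ n) ^ (d - 2)) := by ring
      _ < (1 / 2) * (q : ℝ) ^ (n * d - d ^ 2) := by
        gcongr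
        refine mul_sq_mul_pow_lt_pow (a := c * (1 + δ) * p / (q - 1)) (by positivity) hd2 hdn
          (Nat.cast_nonneg m) (hm.trans_eq (by rw [div_mul_eq_mul_div, div_div])) ?_
        exact hbig.trans_eq' (by rw [div_pow, mul_pow, mul_pow])
  · rw [show n * d - d ^ 2 = (n - d) * d by rw [Nat.sub_mul, sq]]
    gcongr
    exact pow_le_gaussBinom hQ hdn

/-- The chain of inequalities yielding the contradiction: if `ℓ ≤ n`, the class size bound `m`
satisfies `m ≤ c(1+δ)p qⁿ/((q-1)n)`, and `n q^{-d²} > c²(1+δ)²p²/(q-1)²`, then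
`ℓ·(m choose 2)·(qⁿ choose (d-2)) < (1/2) q^{nd-d²} ≤ (1/2)·[n choose d]_q`. -/
theorem contradiction_chain (q n d ℓ m : ℕ) (c δ p : ℝ) (hq : 2 ≤ q) (hn : 1 ≤ n)
    (hd2 : 2 ≤ d) (hdn : d ≤ n) (hl : ℓ ≤ n)
    (hm : (m : ℝ) ≤ c * (1 + δ) * p * (q : ℝ) ^ n / (((q : ℝ) - 1) * n))
    (hbig : c ^ 2 * (1 + δ) ^ 2 * p ^ 2 / ((q : ℝ) - 1) ^ 2 < (n : ℝ) / (q : ℝ) ^ (d ^ 2)) :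
    (ℓ : ℝ) * (Nat.choose m 2 : ℝ) * (Nat.choose (q ^ n) (d - 2) : ℝ)
        < (1 / 2) * (q : ℝ) ^ (n * d - d ^ 2) ∧
    (1 / 2) * (q : ℝ) ^ (n * d - d ^ 2) ≤ (1 / 2) * gaussBinom (q : ℝ) n d :=
  contradiction_chain_general q n d ℓ m c δ p hq hd2 hdn hl hm hbig
end

section
/- Every paving matroid of rank r ≥ 2 with colouring number k ∈ {2,3} and r sufficiently large (so that ⌈rk/(r-1)⌉ = k+1) admits a partition of its ground set into classes of size at most (3/2)·k such that every transversal is independent; i.e., it is (1, 3/2)-decomposable. -/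
/-!
A `k`-colouring covers `E` by `k` independent sets, so `|E| ≤ k r`; the ceiling condition
amounts to `k + 1 ≤ r`, whence `|E| ≤ (k + 1)(r - 1)`. Cut `E` into at most `r - 1` blocks of
size at most `k + 1 ≤ (3/2) k`. A transversal then has fewer than `r` elements, and in a paving
matroid of rank `r` such a set contains no circuit.
-/

open MeasureTheory Set Filter
open scoped ENNReal NNReal Matroid Topology

namespace Matroid

variable {α : Type*} {M : Matroid α}

lemma indep_of_ncard_lt {r : ℕ} (hcircuit : ∀ C, M.IsCircuit C → r ≤ C.ncard) {I : Set α}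
    (hIE : I ⊆ M.E) (hIfin : I.Finite) (hIr : I.ncard < r) : M.Indep I := by
  by_contra hI
  obtain ⟨C, hCI, hC⟩ := ((M.not_indep_iff hIE).1 hI).exists_isCircuit_subset
  have := hcircuit C hC
  have := Set.ncard_le_ncard hCI hIfin
  omega

lemma Indep.ncard_le_rankOf_s18 (hfin : M.E.Finite) {I : Set α} (hI : M.Indep I) :
    I.ncard ≤ M.rankOf M.E :=
  le_csSup ⟨M.E.ncard, by rintro n ⟨J, hJE, -, rfl⟩; exact Set.ncard_le_ncard hJE hfin⟩
    ⟨I, hI.subset_ground, hI, rfl⟩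

lemma colorable_colNumber (h : M.colNumber ≠ 0) : M.Colorable M.colNumber := by
  refine Nat.sInf_mem (s := {k | M.Colorable k}) ?_
  by_contra hempty
  exact h (by rw [colNumber, Set.not_nonempty_iff_eq_empty.1 hempty, Nat.sInf_empty])

lemma Colorable.ncard_ground_le {k : ℕ} (hcol : M.Colorable k) (hfin : M.E.Finite) :
    M.E.ncard ≤ k * M.rankOf M.E := by
  obtain ⟨f, hf_lt, hf_indep⟩ := hcol
  have hcover : M.E ⊆ ⋃ i ∈ Finset.range k, {x ∈ M.E | f x = i} := fun x hx ↦
    Set.mem_biUnion (Finset.mem_range.2 (hf_lt x hx)) ⟨hx, rfl⟩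
  calc M.E.ncard ≤ (⋃ i ∈ Finset.range k, {x ∈ M.E | f x = i}).ncard :=
        Set.ncard_le_ncard hcover ((Finset.finite_toSet _).biUnion fun _ _ ↦ hfin.sep _)
    _ ≤ ∑ i ∈ Finset.range k, {x ∈ M.E | f x = i}.ncard := Finset.set_ncard_biUnion_le _ _
    _ ≤ ∑ _i ∈ Finset.range k, M.rankOf M.E :=
        Finset.sum_le_sum fun i _ ↦ (hf_indep i).ncard_le_rankOf_s18 hfin
    _ = k * M.rankOf M.E := by simp

end Matroid

lemma Set.Finite.exists_fin_partition_ncard_le {α : Type*} {s : Set α} (hs : s.Finite)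
    {m t : ℕ} (hm : 0 < m) (hst : s.ncard ≤ m * t) :
    ∃ ℓ ≤ t, ∃ Es : Fin ℓ → Set α, (∀ i, (Es i).Nonempty) ∧ Set.univ.PairwiseDisjoint Es ∧
      (⋃ i, Es i) = s ∧ ∀ i, (Es i).ncard ≤ m := by
  induction t generalizing s with
  | zero =>
    have hs_empty : s = ∅ := (Set.ncard_eq_zero hs).1 (by simpa using hst)
    exact ⟨0, le_rfl, Fin.elim0, fun i ↦ i.elim0, fun i ↦ i.elim0, by simp [hs_empty],
      fun i ↦ i.elim0⟩
  | succ t ih =>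
    by_cases hs_empty : s = ∅
    · exact ⟨0, Nat.zero_le _, Fin.elim0, fun i ↦ i.elim0, fun i ↦ i.elim0, by simp [hs_empty],
        fun i ↦ i.elim0⟩
    obtain ⟨B, hBs, hBcard⟩ := Set.exists_subset_card_eq (min_le_right m s.ncard)
    have hB : B.Nonempty := by
      rw [← Set.ncard_pos (hs.subset hBs), hBcard]
      exact lt_min hm ((Set.ncard_pos hs).2 (Set.nonempty_iff_ne_empty.2 hs_empty))
    have hrest : (s \ B).ncard ≤ m * t := by
      rw [Set.ncard_sdiff hBs (hs.subset hBs), hBcard]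
      rw [Nat.mul_succ] at hst
      omega
    obtain ⟨ℓ, hℓt, Es, hne, hdisj, hunion, hcard⟩ := ih hs.sdiff hrest
    refine ⟨ℓ + 1, by omega, Fin.cons B Es, Fin.cases hB hne, ?_, ?_, Fin.cases ?_ hcard⟩
    · rw [Set.PairwiseDisjoint, Set.pairwise_univ] at hdisj ⊢
      refine pairwise_fin_succ_iff_of_isSymm.2 ⟨fun j ↦ ?_, hdisj⟩
      have hEj : Es j ⊆ s \ B := hunion ▸ Set.subset_iUnion Es j
      exact Set.disjoint_of_subset_right hEj Set.disjoint_sdiff_right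
    · rw [← Set.union_sdiff_cancel hBs, ← hunion]
      ext x
      simp
    · simp [hBcard]

lemma succ_le_of_ceil_mul_div_sub_one_eq {r k : ℕ}
    (h : ⌈((r : ℝ) * k) / ((r : ℝ) - 1)⌉ = (k : ℤ) + 1) : k + 1 ≤ r := by
  obtain ⟨hlo, hhi⟩ := Int.ceil_eq_iff.1 h
  push_cast at hlo hhi
  have hr : (1 : ℝ) < r := by
    by_contra! hr
    have : (r : ℝ) * k / (r - 1) ≤ 0 := div_nonpos_of_nonneg_of_nonpos (by positivity) (by linarith)
    linarith [(k.cast_nonneg : (0 : ℝ) ≤ k)]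
  rw [div_le_iff₀ (by linarith)] at hhi
  exact_mod_cast (by linarith : (k : ℝ) + 1 ≤ r)

theorem paving_decomposable_general {α : Type*} (M : Matroid α) (r k : ℕ) (hfin : M.E.Finite)
    (hrank : M.rankOf M.E = r)
    (hpaving : ∀ C : Set α, C ⊆ M.E → M.Dep C → (∀ x ∈ C, M.Indep (C \ {x})) → r ≤ C.ncard)
    (hk : M.colNumber = k) (hk23 : k = 2 ∨ k = 3)
    (hceil : ⌈((r : ℝ) * k) / ((r : ℝ) - 1)⌉ = (k : ℤ) + 1) :
    ∃ (ℓ : ℕ) (Es : Fin ℓ → Set α),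
      (∀ i, (Es i).Nonempty) ∧ Set.univ.PairwiseDisjoint Es ∧ (⋃ i, Es i) = M.E ∧
      (∀ i, (Es i).Finite ∧ ((Es i).ncard : ℝ) ≤ (3 / 2) * k) ∧
      ∀ y : Fin ℓ → α, (∀ i, y i ∈ Es i) → M.Indep (Set.range y) := by
  have hkr : k + 1 ≤ r := succ_le_of_ceil_mul_div_sub_one_eq hceil
  have hcol : M.Colorable k := hk ▸ M.colorable_colNumber (by omega)
  have hE : M.E.ncard ≤ (k + 1) * (r - 1) := by
    obtain ⟨d, rfl⟩ := Nat.exists_eq_add_of_le hkr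
    calc M.E.ncard ≤ k * (k + 1 + d) := hrank ▸ hcol.ncard_ground_le hfin
      _ ≤ (k + 1) * (k + 1 + d - 1) := by rw [Nat.add_right_comm, Nat.add_sub_cancel]; nlinarith
  obtain ⟨ℓ, hℓ, Es, hne, hdisj, hunion, hcard⟩ := hfin.exists_fin_partition_ncard_le k.succ_pos hE
  have hcircuit (C : Set α) (hC : M.IsCircuit C) : r ≤ C.ncard :=
    hpaving C hC.subset_ground hC.dep fun _ ↦ hC.sdiff_singleton_indep
  refine ⟨ℓ, Es, hne, hdisj, hunion, fun i ↦ ⟨hfin.subset (hunion ▸ Set.subset_iUnion Es i), ?_⟩,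
    fun y hy ↦ Matroid.indep_of_ncard_lt hcircuit ?_ (Set.finite_range y) ?_⟩
  · have hk32 : ((k + 1 : ℕ) : ℝ) ≤ 3 / 2 * k := by rcases hk23 with rfl | rfl <;> norm_num
    exact (Nat.cast_le.2 (hcard i)).trans hk32
  · rintro _ ⟨i, rfl⟩
    exact hunion ▸ Set.mem_iUnion_of_mem i (hy i)
  · have : (Set.range y).ncard ≤ ℓ := by simpa using Set.ncard_image_le (f := y) (s := Set.univ)
    omega

/-- A paving matroid of rank `r ≥ 2` with colouring number `k ∈ {2,3}` and `r` large enough that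
`⌈rk/(r-1)⌉ = k + 1` admits a partition of its ground set into classes of size at most `(3/2)k`
every transversal of which is independent; i.e. it is `(1, 3/2)`-decomposable. -/
theorem paving_decomposable {α : Type*} (M : Matroid α) (r k : ℕ) (hfin : M.E.Finite)
    (hr : 2 ≤ r) (hrank : M.rankOf M.E = r)
    (hpaving : ∀ C : Set α, C ⊆ M.E → M.Dep C → (∀ x ∈ C, M.Indep (C \ {x})) → r ≤ C.ncard)
    (hk : M.colNumber = k) (hk23 : k = 2 ∨ k = 3)
    (hceil : ⌈((r : ℝ) * k) / ((r : ℝ) - 1)⌉ = (k : ℤ) + 1) :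
    ∃ (ℓ : ℕ) (Es : Fin ℓ → Set α),
      (∀ i, (Es i).Nonempty) ∧ Set.univ.PairwiseDisjoint Es ∧ (⋃ i, Es i) = M.E ∧
      (∀ i, (Es i).Finite ∧ ((Es i).ncard : ℝ) ≤ (3 / 2) * k) ∧
      ∀ y : Fin ℓ → α, (∀ i, y i ∈ Es i) → M.Indep (Set.range y) :=
  paving_decomposable_general M r k hfin hrank hpaving hk hk23 hceil
end
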